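/- arXiv:1605.05801 — 5 statements merged into one kernel-verified Lean document; each statement's English description precedes it below -/
import Mathlib

section
/- Let $V$ be a finite-dimensional vector space over $\mathbb{Q}$ and $V_0,\ldots,V_r \subseteq V$ subspaces. Let $K \subseteq V_0 \oplus \cdots \oplus V_r$ be the kernel of the summation map $(m_0,\ldots,m_r) \mapsto \sum_i m_i$, and define $\alpha(V_0,\ldots,V_r) = \max\{\dim \langle m_0,\ldots,m_r\rangle \mid (m_0,\ldots,m_r) \in K\}$. Then $\alpha(V_0,\ldots,V_r) = \alpha((V_0)_{\mathbb{C}},\ldots,(V_r)_{\mathbb{C}})$, where $(V_i)_{\mathbb{C}} = V_i \otimes_{\mathbb{Q}} \mathbb{C}$ are viewed as subspaces of $V_{\mathbb{C}} = V \otimes_{\mathbb{Q}} \mathbb{C}$. -/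
open Module TensorProduct

/-- The dimension of the span of a finite family of vectors. -/
noncomputable def spanDim (k : Type*) {V : Type*} [DivisionRing k] [AddCommGroup V] [Module k V]
    {r : ℕ} (m : Fin (r + 1) → V) : ℕ :=
  finrank k (Submodule.span k (Set.range m))

/-- The kernel `K` of the summation map `V₀ ⊕ ⋯ ⊕ V_r → V`, realized inside `Π i, V`. -/
noncomputable def kerSum (k : Type*) {V : Type*} [Field k] [AddCommGroup V] [Module k V]
    {r : ℕ} (Vs : Fin (r + 1) → Submodule k V) : Submodule k (Fin (r + 1) → V) :=
  (⨅ i, (Vs i).comap (LinearMap.proj i)) ⊓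
    LinearMap.ker (∑ i, (LinearMap.proj i : (Fin (r + 1) → V) →ₗ[k] V))

/-- The invariant `α(V₀,…,V_r)`: the maximum of `dim ⟨m₀,…,m_r⟩` over `(m₀,…,m_r) ∈ K`. -/
noncomputable def alphaInvariant (k : Type*) {V : Type*} [Field k] [AddCommGroup V] [Module k V]
    {r : ℕ} (Vs : Fin (r + 1) → Submodule k V) : ℕ :=
  sSup { d | ∃ m ∈ kerSum k Vs, spanDim k m = d }

/-!
A family spans a space of dimension `≥ d` iff some `d × d` minor of its coordinate matrix is
nonzero. Base change to `ℂ` preserves dimensions of spans, so every value of `spanDim` on the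
rational kernel is also attained on the complex one. Conversely, the complex kernel is the
complex span of the rational kernel: it contains it, and both have dimension
`∑ dim Vᵢ - dim (∑ Vᵢ)`. For a complex kernel element `∑ cⱼ bⱼ`, with `bⱼ` a rational basis of
the kernel, a nonzero minor is a polynomial in `c` with rational coefficients; being nonzero at
a complex point, it is nonzero at some rational point `c'` because `ℚ` is infinite, and then
`∑ c'ⱼ bⱼ` is a rational kernel element spanning a space of at least the same dimension.
-/

theorem exists_fin_linearIndependent_comp {k W ι : Type*} [Field k] [AddCommGroup W]
    [Module k W] [Finite ι] (v : ι → W) {d : ℕ}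
    (hd : d ≤ finrank k (Submodule.span k (Set.range v))) :
    ∃ τ : Fin d → ι, LinearIndependent k (v ∘ τ) := by
  obtain ⟨κ, a, ha, hspan, hli⟩ := exists_linearIndependent' k v
  have := Finite.of_injective a ha
  have := Fintype.ofFinite κ
  rw [← hspan, finrank_span_eq_card hli] at hd
  obtain ⟨τ⟩ : Nonempty (Fin d ↪ κ) := Function.Embedding.nonempty_of_card_le (by simpa using hd)
  exact ⟨a ∘ τ, hli.comp τ τ.injective⟩

namespace Matrix

variable {m n : Type*}

theorem aeval_det_submatrix_sum_X_smul {R L s p : Type*} [CommRing R] [CommRing L]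
    [Algebra R L] [Fintype s] [Fintype p] [DecidableEq p] (A : s → Matrix m n R)
    (f : p → m) (g : p → n) (x : s → L) :
    MvPolynomial.aeval x ((∑ j, (MvPolynomial.X j : MvPolynomial s R) •
        (A j).map MvPolynomial.C).submatrix f g).det =
      ((∑ j, x j • (A j).map (algebraMap R L)).submatrix f g).det := by
  rw [AlgHom.map_det]
  congr 1
  ext a b
  simp [Matrix.sum_apply]

variable {K : Type*} [Field K] [Fintype m] [Fintype n]

theorem le_rank_iff_exists_submatrix_det_ne_zero (A : Matrix m n K) (d : ℕ) :
    d ≤ A.rank ↔ ∃ (f : Fin d → m) (g : Fin d → n), (A.submatrix f g).det ≠ 0 := by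
  constructor
  · intro hd
    rw [rank_eq_finrank_span_row] at hd
    obtain ⟨f, hf⟩ := exists_fin_linearIndependent_comp A.row hd
    have hcols : d ≤ finrank K (Submodule.span K (Set.range (A.submatrix f id).col)) := by
      rw [← rank_eq_finrank_span_cols, LinearIndependent.rank_matrix (M := A.submatrix f id) hf,
        Fintype.card_fin]
    obtain ⟨g, hg⟩ := exists_fin_linearIndependent_comp _ hcols
    exact ⟨f, g, isUnit_iff_ne_zero.mp <| (isUnit_iff_isUnit_det _).mp <|
      linearIndependent_cols_iff_isUnit.mp hg⟩
  · rintro ⟨f, g, hfg⟩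
    simpa [rank_of_det_ne_zero hfg] using rank_submatrix_le A f g

theorem exists_rank_sum_smul_map_le {k s : Type*} [Field k] [Infinite k] [Algebra k K]
    [Fintype s] (A : s → Matrix m n k) (c : s → K) :
    ∃ c' : s → k, (∑ j, c j • (A j).map (algebraMap k K)).rank ≤ (∑ j, c' j • A j).rank := by
  obtain ⟨f, g, hfg⟩ := (le_rank_iff_exists_submatrix_det_ne_zero
    (∑ j, c j • (A j).map (algebraMap k K)) _).1 le_rfl
  obtain ⟨c', hc'⟩ : ∃ c' : s → k, MvPolynomial.eval c'
      ((∑ j, (MvPolynomial.X j : MvPolynomial s k) • (A j).map MvPolynomial.C).submatrix f g).det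
        ≠ 0 := by
    by_contra! h
    refine hfg ?_
    rw [← aeval_det_submatrix_sum_X_smul]
    convert map_zero (MvPolynomial.aeval c)
    exact MvPolynomial.funext fun x ↦ by simpa using h x
  refine ⟨c', (le_rank_iff_exists_submatrix_det_ne_zero _ _).2 ⟨f, g, ?_⟩⟩
  simpa [← MvPolynomial.coe_aeval_eq_eval, aeval_det_submatrix_sum_X_smul] using hc'

end Matrix

namespace Submodule

theorem span_image_span_of_tower {k K W W' : Type*} [CommSemiring k] [Semiring K] [Algebra k K]
    [AddCommMonoid W] [Module k W] [AddCommMonoid W'] [Module K W'] [Module k W']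
    [IsScalarTower k K W'] (φ : W →ₗ[k] W') (s : Set W) :
    span K (φ '' span k s) = span K (φ '' s) := by
  rw [← map_coe, map_span, span_span_of_tower]

theorem span_range_subtype_comp_basis {k W ι : Type*} [Semiring k] [AddCommMonoid W]
    [Module k W] {p : Submodule k W} (b : Basis ι k p) :
    span k (Set.range (p.subtype ∘ b)) = p := by
  rw [Set.range_comp, span_image, b.span_eq, map_subtype_top]

theorem baseChange_iSup {R A M ι : Type*} [CommSemiring R] [Semiring A] [Algebra R A]
    [AddCommMonoid M] [Module R M] (p : ι → Submodule R M) :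
    (⨆ i, p i).baseChange A = ⨆ i, (p i).baseChange A := by
  rw [iSup_eq_span, baseChange_span, Set.image_iUnion, span_iUnion]
  simp only [baseChange_eq_span, map_coe]

end Submodule

section MapBasis

variable {k K W W' n : Type*} [Field k] [Field K] [Algebra k K] [Fintype n]
  [AddCommGroup W] [Module k W] [AddCommGroup W'] [Module K W'] [Module k W']
  [IsScalarTower k K W'] {e : Basis n k W} {e' : Basis n K W'} {φ : W →ₗ[k] W'}

theorem Module.Basis.equivFun_map_of_map_basis (hφ : ∀ t, φ (e t) = e' t) (w : W) :
    e'.equivFun (φ w) = algebraMap k K ∘ e.equivFun w := by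
  suffices φ w = e'.equivFun.symm (algebraMap k K ∘ e.equivFun w) by
    rw [this, LinearEquiv.apply_symm_apply]
  conv_lhs => rw [← e.sum_equivFun w, map_sum]
  simp only [map_smul, hφ, Basis.equivFun_symm_apply, Function.comp_apply, algebraMap_smul]

theorem linearIndependent_comp_iff_of_map_basis (hφ : ∀ t, φ (e t) = e' t) {ι : Type*}
    {v : ι → W} : LinearIndependent K (φ ∘ v) ↔ LinearIndependent k v := by
  have hcoord : e'.equivFun ∘ φ ∘ v = fun i ↦ algebraMap k K ∘ e.equivFun (v i) :=
    funext fun i ↦ Module.Basis.equivFun_map_of_map_basis hφ (v i)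
  rw [← e'.equivFun.toLinearMap.linearIndependent_iff_of_injOn e'.equivFun.injective.injOn,
    ← e.equivFun.toLinearMap.linearIndependent_iff_of_injOn e.equivFun.injective.injOn,
    LinearEquiv.coe_toLinearMap, hcoord, linearIndependent_algebraMap_comp_iff]
  rfl

theorem finrank_span_image_of_map_basis (hφ : ∀ t, φ (e t) = e' t) (s : Set W) :
    finrank K (Submodule.span K (φ '' s)) = finrank k (Submodule.span k s) := by
  have := Module.Finite.of_basis e
  let b := Module.finBasis k (Submodule.span k s)
  have hli : LinearIndependent k ((Submodule.span k s).subtype ∘ b) :=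
    b.linearIndependent.map' _ (Submodule.ker_subtype _)
  calc finrank K (Submodule.span K (φ '' s))
      = finrank K (Submodule.span K (Set.range (φ ∘ (Submodule.span k s).subtype ∘ b))) := by
        rw [Set.range_comp, ← Submodule.span_image_span_of_tower φ (Set.range _),
          Submodule.span_range_subtype_comp_basis, Submodule.span_image_span_of_tower]
    _ = finrank k (Submodule.span k s) := by
        rw [finrank_span_eq_card ((linearIndependent_comp_iff_of_map_basis hφ).2 hli),
          Fintype.card_fin]

end MapBasis

section Kernel

variable {k V : Type*} [Field k] [AddCommGroup V] [Module k V] {r : ℕ}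

theorem spanDim_eq_rank {n : Type*} [Fintype n] (e : Basis n k V) (m : Fin (r + 1) → V) :
    spanDim k m = (Matrix.of fun i ↦ e.equivFun (m i)).rank := by
  rw [Matrix.rank_eq_finrank_span_row, spanDim, ← e.equivFun.finrank_map_eq, Submodule.map_span,
    ← Set.range_comp]
  rfl

theorem mem_kerSum {Vs : Fin (r + 1) → Submodule k V} {m : Fin (r + 1) → V} :
    m ∈ kerSum k Vs ↔ (∀ i, m i ∈ Vs i) ∧ ∑ i, m i = 0 := by
  simp [kerSum, Submodule.mem_iInf, LinearMap.sum_apply]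

theorem finrank_kerSum_add_finrank_iSup [FiniteDimensional k V]
    (Vs : Fin (r + 1) → Submodule k V) :
    finrank k (kerSum k Vs) + finrank k ↥(⨆ i, Vs i) = ∑ i, finrank k (Vs i) := by
  let Φ : ((i : Fin (r + 1)) → Vs i) →ₗ[k] Fin (r + 1) → V :=
    LinearMap.pi fun i ↦ (Vs i).subtype ∘ₗ LinearMap.proj i
  let σ : ((i : Fin (r + 1)) → Vs i) →ₗ[k] V := ∑ i, (Vs i).subtype ∘ₗ LinearMap.proj i
  have hΦ : Function.Injective Φ := fun x y h ↦ funext fun i ↦ Subtype.ext (congrFun h i)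
  have hker : (LinearMap.ker σ).map Φ = kerSum k Vs := by
    ext m
    simp only [Submodule.mem_map, LinearMap.mem_ker, mem_kerSum]
    constructor
    · rintro ⟨x, hx, rfl⟩
      exact ⟨fun i ↦ (x i).2, by simpa [σ, Φ, LinearMap.sum_apply] using hx⟩
    · rintro ⟨hm, hsum⟩
      exact ⟨fun i ↦ ⟨m i, hm i⟩, by simpa [σ, LinearMap.sum_apply] using hsum, rfl⟩
  have hrange : LinearMap.range σ = ⨆ i, Vs i := by
    refine le_antisymm ?_ (iSup_le fun i v hv ↦ ⟨Pi.single i ⟨v, hv⟩, ?_⟩)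
    · rintro _ ⟨x, rfl⟩
      simpa [σ, LinearMap.sum_apply] using
        Submodule.sum_mem _ fun i _ ↦ Submodule.mem_iSup_of_mem i (x i).2
    · simp only [σ, LinearMap.sum_apply]
      rw [Finset.sum_eq_single i (fun j _ hj ↦ by simp [Pi.single_eq_of_ne hj]) (by simp)]
      simp
  rw [← hker, ← hrange, ← (Submodule.equivMapOfInjective Φ hΦ _).finrank_eq, add_comm,
    LinearMap.finrank_range_add_finrank_ker, Module.finrank_pi_fintype]

end Kernel

section BaseChange

variable {k K V : Type*} [Field k] [Field K] [Algebra k K] [AddCommGroup V] [Module k V] {r : ℕ}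

theorem Submodule.finrank_baseChange [FiniteDimensional k V] (p : Submodule k V) :
    finrank K (p.baseChange K) = finrank k p := by
  let e := Module.finBasis k V
  rw [baseChange_eq_span, map_coe, finrank_span_image_of_map_basis
    (e' := e.baseChange K) (fun t ↦ (e.baseChange_apply K t).symm), span_eq]

theorem spanDim_tmul [FiniteDimensional k V] (m : Fin (r + 1) → V) :
    spanDim K (fun i ↦ (1 : K) ⊗ₜ[k] m i) = spanDim k m := by
  let e := Module.finBasis k V
  rw [spanDim, spanDim, show (fun i ↦ (1 : K) ⊗ₜ[k] m i) = TensorProduct.mk k K V 1 ∘ m from rfl,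
    Set.range_comp, finrank_span_image_of_map_basis
    (e' := e.baseChange K) (fun t ↦ (e.baseChange_apply K t).symm)]

theorem tmul_mem_kerSum_baseChange {Vs : Fin (r + 1) → Submodule k V} {m : Fin (r + 1) → V}
    (hm : m ∈ kerSum k Vs) :
    (fun i ↦ (1 : K) ⊗ₜ[k] m i) ∈ kerSum K (fun i ↦ (Vs i).baseChange K) := by
  rw [mem_kerSum] at hm ⊢
  exact ⟨fun i ↦ Submodule.tmul_mem_baseChange_of_mem 1 (hm.1 i), by
    rw [← TensorProduct.tmul_sum, hm.2, TensorProduct.tmul_zero]⟩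

theorem compLeft_mk_one_pi_basis {n : Type*} (e : Basis n k V) (x : Σ _ : Fin (r + 1), n) :
    (TensorProduct.mk k K V 1).compLeft (Fin (r + 1)) (Pi.basis (fun _ ↦ e) x) =
      Pi.basis (fun _ ↦ e.baseChange K) x := by
  obtain ⟨i, t⟩ := x
  ext j
  by_cases hj : j = i
  · subst hj
    simp
  · simp [hj]

theorem kerSum_baseChange [FiniteDimensional k V] (Vs : Fin (r + 1) → Submodule k V) :
    kerSum K (fun i ↦ (Vs i).baseChange K) =
      Submodule.span K ((TensorProduct.mk k K V 1).compLeft (Fin (r + 1)) '' kerSum k Vs) := by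
  symm
  apply Submodule.eq_of_le_of_finrank_le
  · rw [Submodule.span_le]
    rintro _ ⟨m, hm, rfl⟩
    exact tmul_mem_kerSum_baseChange hm
  · have hk := finrank_kerSum_add_finrank_iSup Vs
    have hK := finrank_kerSum_add_finrank_iSup (fun i ↦ (Vs i).baseChange K)
    rw [← Submodule.baseChange_iSup] at hK
    simp only [Submodule.finrank_baseChange] at hK
    rw [finrank_span_image_of_map_basis (compLeft_mk_one_pi_basis (Module.finBasis k V)),
      Submodule.span_eq]
    omega

theorem exists_mem_kerSum_spanDim_le [FiniteDimensional k V] [Infinite k]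
    {Vs : Fin (r + 1) → Submodule k V} {M : Fin (r + 1) → K ⊗[k] V}
    (hM : M ∈ kerSum K (fun i ↦ (Vs i).baseChange K)) :
    ∃ m ∈ kerSum k Vs, spanDim K M ≤ spanDim k m := by
  let e := Module.finBasis k V
  let b := Module.finBasis k (kerSum k Vs)
  rw [kerSum_baseChange, ← Submodule.span_range_subtype_comp_basis b,
    Submodule.span_image_span_of_tower, ← Set.range_comp] at hM
  obtain ⟨c, rfl⟩ := (Submodule.mem_span_range_iff_exists_fun K).1 hM
  let A j : Matrix (Fin (r + 1)) _ k := Matrix.of fun i ↦ e.equivFun ((b j : Fin (r + 1) → V) i)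
  obtain ⟨c', hc'⟩ := Matrix.exists_rank_sum_smul_map_le A c
  refine ⟨∑ j, c' j • (b j : Fin (r + 1) → V),
    Submodule.sum_mem _ fun j _ ↦ Submodule.smul_mem _ _ (b j).2, ?_⟩
  rw [spanDim_eq_rank (e.baseChange K), spanDim_eq_rank e]
  convert hc' using 2
  · ext i t
    simp [A, Matrix.sum_apply, Algebra.smul_def, mul_comm]
  · ext i t
    simp [A, Matrix.sum_apply]

theorem alphaInvariant_baseChange [FiniteDimensional k V] [Infinite k]
    (Vs : Fin (r + 1) → Submodule k V) :
    alphaInvariant K (fun i ↦ (Vs i).baseChange K) = alphaInvariant k Vs := by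
  refine csSup_eq_csSup_of_forall_exists_le ?_ ?_
  · rintro _ ⟨M, hM, rfl⟩
    obtain ⟨m, hm, hle⟩ := exists_mem_kerSum_spanDim_le hM
    exact ⟨_, ⟨m, hm, rfl⟩, hle⟩
  · rintro _ ⟨m, hm, rfl⟩
    exact ⟨_, ⟨_, tmul_mem_kerSum_baseChange hm, rfl⟩, (spanDim_tmul m).ge⟩

end BaseChange

/-- `α` does not change under base change from `ℚ` to `ℂ`. -/
theorem stmt1 {V : Type*} [AddCommGroup V] [Module ℚ V] [FiniteDimensional ℚ V]
    {r : ℕ} (Vs : Fin (r + 1) → Submodule ℚ V) :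
    alphaInvariant ℚ Vs = alphaInvariant ℂ (fun i => (Vs i).baseChange ℂ) :=
  (alphaInvariant_baseChange Vs).symm
end

section
/- Let $V$ be a finite-dimensional vector space over a field $k$ ($k = \mathbb{Q}$ or $\mathbb{C}$), $V_0,\ldots,V_r \subseteq V$ subspaces, and $K$ the kernel of the summation map $V_0 \oplus \cdots \oplus V_r \to V$. Suppose that for general $(m_0,\ldots,m_r) \in K$ and any indices $i,j$, removing $m_i$ and $m_j$ does not decrease the span: $\langle m_l \mid l \neq i,j \rangle_k = \langle m_0,\ldots,m_r \rangle_k$. Fix a general $(m_0,\ldots,m_r) \in K$ and set $V' = \langle m_0,\ldots,m_r \rangle_k$. Then for every $(m'_0,\ldots,m'_r) \in K$, each $m'_i$ lies in $V'$. -/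
/-!
Removing `m_i` together with any other `m_j` keeps the span, so among the linear relations
`∑ e_l m_l = 0` with `e_i = 0` there is, the field being infinite, one with all other `e_l ≠ 0`.
Then `m̃_l = e_l m_l` lies in `K`, has `m̃_i = 0` and spans `V'`. Given `m' ∈ K`, extract a basis
of `V'` from the `m̃_l`; for all but finitely many `s` it stays independent after adding `s • m'`,
so by maximality of `dim V'` it spans `⟨m̃ + s m'⟩ ∋ s m'_i`. If `m'_i ∉ V'`, then for generic `s`
the vector `m'_i` also stays outside that span, a contradiction.
-/

open Module Submodule Polynomial Filter

section

variable {k V ι : Type*} [Field k] [AddCommGroup V] [Module k V]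

theorem LinearIndependent.exists_linearMap_apply_eq_single [Fintype ι] [DecidableEq ι]
    {a : ι → V} (ha : LinearIndependent k a) :
    ∃ g : V →ₗ[k] ι → k, ∀ j, g (a j) = Pi.single j 1 := by
  obtain ⟨g, hg⟩ := LinearMap.exists_leftInverse_of_injective (Fintype.linearCombination k a)
    (LinearMap.ker_eq_bot.mpr (linearIndependent_iff_injective_fintypeLinearCombination.mp ha))
  refine ⟨g, fun j => ?_⟩
  simpa [Fintype.linearCombination_apply_single] using LinearMap.congr_fun hg (Pi.single j 1)

theorem eventually_cofinite_linearIndependent_add_smul [Finite ι] {a : ι → V}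
    (ha : LinearIndependent k a) (b : ι → V) :
    ∀ᶠ s : k in cofinite, LinearIndependent k (a + s • b) := by
  classical
  cases nonempty_fintype ι
  -- `g` maps `a + s • b` to the rows of `1 + s • B`, whose determinant is a polynomial in `s`
  -- with constant term `1`.
  obtain ⟨g, hg⟩ := ha.exists_linearMap_apply_eq_single
  set B : Matrix ι ι k := Matrix.of fun j => g (b j)
  set p : k[X] := (1 + (X : k[X]) • B.map C).det
  have hp : p ≠ 0 := fun h => by
    simpa [p, h] using congrArg (eval 0) (Matrix.det_one_add_X_smul B)
  have heval (s : k) : p.eval s = (1 + s • B).det := by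
    rw [← coe_evalRingHom, RingHom.map_det, RingHom.mapMatrix_apply]
    congr 1
    ext i j
    by_cases h : i = j <;> simp [h, mul_comm s]
  refine (p.finite_setOfPred_isRoot hp).subset fun s hs => ?_
  by_contra hroot
  refine hs (LinearIndependent.of_comp g ?_)
  have hrows : g ∘ (a + s • b) = (1 + s • B).row := by
    ext j l
    by_cases h : j = l <;> simp [hg, B, h, Matrix.one_apply_ne, Ne.symm]
  rw [hrows, Matrix.linearIndependent_rows_iff_isUnit, Matrix.isUnit_iff_isUnit_det,
    isUnit_iff_ne_zero, ← heval]
  exact hroot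

theorem eventually_cofinite_linearIndependent_add_smul_and_notMem_span [Finite ι] {a : ι → V}
    {w : V} (ha : LinearIndependent k a) (hw : w ∉ span k (Set.range a)) (b : ι → V) :
    ∀ᶠ s : k in cofinite,
      LinearIndependent k (a + s • b) ∧ w ∉ span k (Set.range (a + s • b)) := by
  filter_upwards [eventually_cofinite_linearIndependent_add_smul (ha.option hw)
    (fun o => Option.casesOn' o 0 b)] with s hs
  obtain ⟨hli, hw⟩ := linearIndependent_option.mp hs
  simp only [Pi.add_apply, Pi.smul_apply, Option.casesOn'_none, smul_zero, add_zero] at hw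
  exact ⟨hli, hw⟩

theorem apply_mem_span_range_of_forall_finrank_le [Finite ι] [Infinite k]
    {K : Submodule k (ι → V)} {x : ι → V} (hx : x ∈ K)
    (hmax : ∀ u ∈ K, finrank k (span k (Set.range u)) ≤ finrank k (span k (Set.range x)))
    {y : ι → V} (hy : y ∈ K) {i : ι} (hxi : x i = 0) :
    y i ∈ span k (Set.range x) := by
  by_contra hyi
  obtain ⟨κ, a, ha, hspan, hli⟩ := exists_linearIndependent' k x
  have : Fintype κ := @Fintype.ofFinite _ (Finite.of_injective a ha)
  rw [← hspan] at hyi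
  obtain ⟨s, ⟨hli_s, hyi_s⟩, hs⟩ :=
    ((eventually_cofinite_linearIndependent_add_smul_and_notMem_span hli hyi (y ∘ a)).and
      (eventually_cofinite_ne 0)).exists
  set u := x + s • y
  have hu : u ∈ K := K.add_mem hx (K.smul_mem s hy)
  have : FiniteDimensional k (span k (Set.range u)) := .span_of_finite k (Set.finite_range u)
  have hspan_u : span k (Set.range (u ∘ a)) = span k (Set.range u) := by
    refine eq_of_le_of_finrank_le (span_mono (Set.range_comp_subset_range a u)) ?_
    have hli_u : LinearIndependent k (u ∘ a) := hli_s
    rw [finrank_span_eq_card hli_u, ← finrank_span_eq_card hli, hspan]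
    exact hmax u hu
  have hui : u i = s • y i := by simp [u, hxi]
  refine hyi_s ((smul_mem_iff _ hs).mp ?_)
  rw [← hui]
  exact hspan_u ▸ subset_span (Set.mem_range_self i)

theorem exists_sum_smul_eq_zero_and_forall_ne_zero [Fintype ι] [Infinite k] {m : ι → V} {i : ι}
    (h : ∀ j ≠ i, m j ∈ span k (m '' {l | l ≠ i ∧ l ≠ j})) :
    ∃ e : ι → k, ∑ l, e l • m l = 0 ∧ e i = 0 ∧ ∀ l ≠ i, e l ≠ 0 := by
  classical
  let W := LinearMap.ker (Finsupp.linearCombination k m) ⊓ LinearMap.ker (Finsupp.lapply i)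
  have hrel (j : {l // l ≠ i}) : ∃ c ∈ W, c j ≠ 0 := by
    obtain ⟨j, hj⟩ := j
    obtain ⟨c, hc, hcm⟩ := (Finsupp.mem_span_image_iff_linearCombination k).mp (h j hj)
    rw [Finsupp.mem_supported'] at hc
    refine ⟨c - Finsupp.single j 1, ⟨?_, ?_⟩, ?_⟩
    · simp [hcm]
    · simp [hc i (by simp), Finsupp.single_eq_of_ne hj.symm]
    · simp [hc j (by simp)]
  obtain ⟨e, ⟨hsum, hi⟩, hne⟩ :=
    Module.Dual.exists_forall_mem_ne_zero_of_forall_exists W (fun l : {l // l ≠ i} => Finsupp.lapply l.1) hrel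
  refine ⟨e, ?_, hi, fun l hl => hne ⟨l, hl⟩⟩
  simpa [Finsupp.linearCombination_apply, Finsupp.sum_fintype] using hsum

theorem span_range_smul_eq_span_image (e : ι → k) (m : ι → V) :
    span k (Set.range fun i => e i • m i) = span k (m '' {i | e i ≠ 0}) := by
  apply le_antisymm <;> rw [span_le]
  · rintro _ ⟨i, rfl⟩
    by_cases hi : e i = 0
    · simp [hi]
    · exact smul_mem _ _ (subset_span ⟨i, hi, rfl⟩)
  · rintro _ ⟨i, hi, rfl⟩
    rw [← inv_smul_smul₀ hi (m i)]
    exact smul_mem _ _ (subset_span ⟨i, rfl⟩)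

section SumKernel

variable [Fintype ι]

def sumKernel (Vs : ι → Submodule k V) : Submodule k (ι → V) :=
  Submodule.pi Set.univ Vs ⊓ LinearMap.ker (∑ i, LinearMap.proj i)

variable {Vs : ι → Submodule k V}

theorem mem_sumKernel {m : ι → V} : m ∈ sumKernel Vs ↔ (∀ i, m i ∈ Vs i) ∧ ∑ i, m i = 0 := by
  simp [sumKernel]

theorem exists_mem_sumKernel_apply_eq_zero_and_span_eq [Infinite k] {m : ι → V}
    (hm : ∀ i, m i ∈ Vs i) {i : ι}
    (hrem : ∀ j, span k (m '' {l | l ≠ i ∧ l ≠ j}) = span k (Set.range m)) :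
    ∃ mt ∈ sumKernel Vs, mt i = 0 ∧ span k (Set.range mt) = span k (Set.range m) := by
  obtain ⟨e, he, hei, hne⟩ := exists_sum_smul_eq_zero_and_forall_ne_zero (i := i)
    fun j _ => hrem j ▸ subset_span (Set.mem_range_self j)
  refine ⟨fun l => e l • m l, mem_sumKernel.mpr ⟨fun l => smul_mem _ _ (hm l), he⟩,
    by simp [hei], ?_⟩
  rw [span_range_smul_eq_span_image, ← hrem i]
  congr
  ext l
  by_cases hl : l = i <;> simp [hl, hei, hne]

end SumKernel

end

theorem stmt2_general {k V : Type*} [Field k] [Infinite k] [AddCommGroup V] [Module k V]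
    {r : ℕ} (Vs : Fin (r + 1) → Submodule k V)
    (m : Fin (r + 1) → V) (hmV : ∀ i, m i ∈ Vs i)
    -- `m` attains the maximal span dimension `α(V₀,…,V_r)` on `K`
    (hmax : ∀ m' : Fin (r + 1) → V, (∀ i, m' i ∈ Vs i) → ∑ i, m' i = 0 →
      finrank k (Submodule.span k (Set.range m')) ≤ finrank k (Submodule.span k (Set.range m)))
    -- the removal condition (*) holds at `m`: removing any two of the `m_l` keeps the span
    (hrem : ∀ i j : Fin (r + 1),
      Submodule.span k (m '' {l | l ≠ i ∧ l ≠ j}) = Submodule.span k (Set.range m)) :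
    ∀ m' : Fin (r + 1) → V, (∀ i, m' i ∈ Vs i) → ∑ i, m' i = 0 →
      ∀ i, m' i ∈ Submodule.span k (Set.range m) := by
  intro m' hm'V hm'sum i
  obtain ⟨mt, hmt, hmti, hspan⟩ := exists_mem_sumKernel_apply_eq_zero_and_span_eq hmV (hrem i)
  rw [← hspan]
  refine apply_mem_span_range_of_forall_finrank_le hmt (fun u hu => ?_)
    (mem_sumKernel.mpr ⟨hm'V, hm'sum⟩) hmti
  exact hspan ▸ hmax u (mem_sumKernel.mp hu).1 (mem_sumKernel.mp hu).2

/-- Suppose the removal condition (*) holds for a general element of the kernel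
`K = {(m₀,…,m_r) | m_i ∈ V_i, ∑ m_i = 0}`.  Fix such a general element `m`: being general, it
attains the maximal span dimension on `K` and satisfies the removal condition.  Then every
element `(m'₀,…,m'_r)` of `K` has all its components in `V' = ⟨m₀,…,m_r⟩`. -/
theorem stmt2 {k V : Type*} [Field k] [Infinite k] [AddCommGroup V] [Module k V]
    [FiniteDimensional k V] {r : ℕ} (Vs : Fin (r + 1) → Submodule k V)
    (m : Fin (r + 1) → V) (hmV : ∀ i, m i ∈ Vs i) (hmsum : ∑ i, m i = 0)
    -- `m` attains the maximal span dimension `α(V₀,…,V_r)` on `K`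
    (hmax : ∀ m' : Fin (r + 1) → V, (∀ i, m' i ∈ Vs i) → ∑ i, m' i = 0 →
      finrank k (Submodule.span k (Set.range m')) ≤ finrank k (Submodule.span k (Set.range m)))
    -- the removal condition (*) holds at `m`: removing any two of the `m_l` keeps the span
    (hrem : ∀ i j : Fin (r + 1),
      Submodule.span k (m '' {l | l ≠ i ∧ l ≠ j}) = Submodule.span k (Set.range m)) :
    ∀ m' : Fin (r + 1) → V, (∀ i, m' i ∈ Vs i) → ∑ i, m' i = 0 →
      ∀ i, m' i ∈ Submodule.span k (Set.range m) :=
  stmt2_general Vs m hmV hmax hrem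
end

section
/- Let $A'_0,\ldots,A'_r,A'_{r+1} \subset \mathbb{Z}^{n-r-1}$ be finite subsets with $0 \le r \le n-1$. Define $A_0 = (A'_0 \times \{0\}) \cup (A'_{r+1} \times \{e_{r+1}\}) \subset \mathbb{Z}^{n-r-1} \times \mathbb{Z}$ and $A_i = A'_i \times \{0\}$ for $1 \le i \le r$. If the Cayley sum $A'_0 * \cdots * A'_r * A'_{r+1}$ is of join type, then the Cayley sum $A_0 * \cdots * A_r$ is of join type. -/
open Pointwise

/-- A family `A₀, …, A_r` of subsets of an abelian group is *of join type* if the summation map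
`⟨A₀ - A₀⟩ ⊕ ⋯ ⊕ ⟨A_r - A_r⟩ → M` is injective, i.e. whenever `v_i ∈ ⟨A_i - A_i⟩` and
`∑ v_i = 0` then all `v_i = 0`. -/
def IsJoinType {M : Type*} [AddCommGroup M] {r : ℕ} (As : Fin (r + 1) → Set M) : Prop :=
  ∀ v : Fin (r + 1) → M, (∀ i, v i ∈ AddSubgroup.closure (As i - As i)) →
    ∑ i, v i = 0 → ∀ i, v i = 0

/-- given finite `A'₀, …, A'_{r+1} ⊂ ℤ^{n-r-1}`, set
`A₀ = A'₀ × {0} ∪ A'_{r+1} × {e_{r+1}}` and `A_i = A'_i × {0}` for `1 ≤ i ≤ r`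
inside `ℤ^{n-r-1} × ℤ`.  If `A'₀ * ⋯ * A'_{r+1}` is of join type, so is `A₀ * ⋯ * A_r`. -/
theorem stmt6 {n r : ℕ} (hrn : r + 1 ≤ n)
    (A' : Fin (r + 1 + 1) → Set (Fin (n - r - 1) → ℤ)) (hA' : ∀ i, (A' i).Finite)
    (hjoin : IsJoinType A') :
    IsJoinType (fun i : Fin (r + 1) =>
      if i = 0 then
        (A' 0 ×ˢ ({0} : Set ℤ)) ∪ (A' (Fin.last (r + 1)) ×ˢ ({1} : Set ℤ))
      else (A' i.castSucc) ×ˢ ({0} : Set ℤ)) := by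
  classical
  intro v hv hsum
  set C₀ : AddSubgroup (Fin (n - r - 1) → ℤ) := AddSubgroup.closure (A' 0 - A' 0) with hC₀
  set C₁ : AddSubgroup (Fin (n - r - 1) → ℤ) :=
    AddSubgroup.closure (A' (Fin.last (r + 1)) - A' (Fin.last (r + 1))) with hC₁
  set A₀ : Set ((Fin (n - r - 1) → ℤ) × ℤ) :=
    (A' 0 ×ˢ ({0} : Set ℤ)) ∪ (A' (Fin.last (r + 1)) ×ˢ ({1} : Set ℤ)) with hA₀
  -- choose the vector c
  obtain ⟨c, hc⟩ : ∃ c : Fin (n - r - 1) → ℤ, ∀ x ∈ A₀, ∀ y ∈ A₀,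
      x.1 - y.1 - (x.2 - y.2) • c ∈ C₀ ⊔ C₁ := by
    by_cases h0 : (A' 0).Nonempty
    · by_cases h1 : (A' (Fin.last (r + 1))).Nonempty
      · obtain ⟨a, ha⟩ := h0
        obtain ⟨b, hb⟩ := h1
        refine ⟨b - a, ?_⟩
        rintro x (⟨hx1, hx2⟩ | ⟨hx1, hx2⟩) y (⟨hy1, hy2⟩ | ⟨hy1, hy2⟩) <;>
            simp only [Set.mem_singleton_iff] at hx2 hy2 <;> rw [hx2, hy2]
        · simp only [sub_self, zero_smul, sub_zero]
          exact AddSubgroup.mem_sup_left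
            (AddSubgroup.subset_closure (Set.sub_mem_sub hx1 hy1))
        · -- x ∈ A'0 × {0}, y ∈ A'last × {1}
          have e : x.1 - y.1 - ((0 : ℤ) - 1) • (b - a) = (x.1 - a) + (b - y.1) := by
            rw [show ((0 : ℤ) - 1) = -1 by norm_num, neg_one_smul, sub_neg_eq_add]
            abel
          rw [e]
          exact add_mem
            (AddSubgroup.mem_sup_left (AddSubgroup.subset_closure (Set.sub_mem_sub hx1 ha)))
            (AddSubgroup.mem_sup_right (AddSubgroup.subset_closure (Set.sub_mem_sub hb hy1)))
        · -- x ∈ A'last × {1}, y ∈ A'0 × {0}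
          have e : x.1 - y.1 - ((1 : ℤ) - 0) • (b - a) = (a - y.1) + (x.1 - b) := by
            rw [show ((1 : ℤ) - 0) = 1 by norm_num, one_smul]
            abel
          rw [e]
          exact add_mem
            (AddSubgroup.mem_sup_left (AddSubgroup.subset_closure (Set.sub_mem_sub ha hy1)))
            (AddSubgroup.mem_sup_right (AddSubgroup.subset_closure (Set.sub_mem_sub hx1 hb)))
        · simp only [sub_self, zero_smul, sub_zero]
          exact AddSubgroup.mem_sup_right
            (AddSubgroup.subset_closure (Set.sub_mem_sub hx1 hy1))
      · refine ⟨0, ?_⟩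
        rintro x (⟨hx1, hx2⟩ | ⟨hx1, hx2⟩) y (⟨hy1, hy2⟩ | ⟨hy1, hy2⟩)
        · simp only [smul_zero, sub_zero]
          exact AddSubgroup.mem_sup_left
            (AddSubgroup.subset_closure (Set.sub_mem_sub hx1 hy1))
        · exact absurd ⟨y.1, hy1⟩ h1
        · exact absurd ⟨x.1, hx1⟩ h1
        · exact absurd ⟨x.1, hx1⟩ h1
    · refine ⟨0, ?_⟩
      rintro x (⟨hx1, hx2⟩ | ⟨hx1, hx2⟩) y (⟨hy1, hy2⟩ | ⟨hy1, hy2⟩)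
      · exact absurd ⟨x.1, hx1⟩ h0
      · exact absurd ⟨x.1, hx1⟩ h0
      · exact absurd ⟨y.1, hy1⟩ h0
      · simp only [smul_zero, sub_zero]
        exact AddSubgroup.mem_sup_right
          (AddSubgroup.subset_closure (Set.sub_mem_sub hx1 hy1))
  -- the homomorphism φ (m, k) = m - k • c
  let φ : ((Fin (n - r - 1) → ℤ) × ℤ) →+ (Fin (n - r - 1) → ℤ) :=
    (AddMonoidHom.fst _ ℤ) - ((zmultiplesHom _ c).comp (AddMonoidHom.snd _ ℤ))
  have hφ : ∀ p : (Fin (n - r - 1) → ℤ) × ℤ, φ p = p.1 - p.2 • c := fun p => rfl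
  -- the 0-th component
  have hv0 : v 0 ∈ AddSubgroup.closure (A₀ - A₀) := by
    have := hv 0
    simpa only [eq_self_iff_true, if_true] using this
  have hφ0 : φ (v 0) ∈ C₀ ⊔ C₁ := by
    have hle : AddSubgroup.closure (A₀ - A₀) ≤ (C₀ ⊔ C₁).comap φ := by
      rw [AddSubgroup.closure_le]
      rintro p ⟨x, hx, y, hy, rfl⟩
      simp only [AddSubgroup.coe_comap, Set.mem_preimage, SetLike.mem_coe, hφ,
        Prod.fst_sub, Prod.snd_sub]
      exact hc x hx y hy
    exact hle hv0
  -- the other components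
  have hother : ∀ i : Fin (r + 1), i ≠ 0 →
      (v i).1 ∈ AddSubgroup.closure (A' i.castSucc - A' i.castSucc) ∧ (v i).2 = 0 := by
    intro i hi
    have hvi := hv i
    simp only [if_neg hi] at hvi
    have hle : AddSubgroup.closure ((A' i.castSucc ×ˢ ({0} : Set ℤ)) -
        (A' i.castSucc ×ˢ ({0} : Set ℤ))) ≤
        (AddSubgroup.closure (A' i.castSucc - A' i.castSucc)).prod ⊥ := by
      rw [AddSubgroup.closure_le]
      rintro p ⟨x, ⟨hx1, hx2⟩, y, ⟨hy1, hy2⟩, rfl⟩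
      simp only [Set.mem_singleton_iff] at hx2 hy2
      refine ⟨AddSubgroup.subset_closure (Set.sub_mem_sub hx1 hy1), ?_⟩
      simp [hx2, hy2]
    have := hle hvi
    rw [AddSubgroup.mem_prod] at this
    exact ⟨this.1, by simpa using this.2⟩
  -- sums of components
  have hsum1 : ∑ i, (v i).1 = 0 := by
    have := congrArg Prod.fst hsum
    rw [Prod.fst_sum] at this
    simpa using this
  have hsum2 : ∑ i, (v i).2 = 0 := by
    have := congrArg Prod.snd hsum
    rw [Prod.snd_sum] at this
    simpa using this
  have hv02 : (v 0).2 = 0 := by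
    rw [Fin.sum_univ_succ] at hsum2
    have : ∑ i : Fin r, (v i.succ).2 = 0 :=
      Finset.sum_eq_zero fun i _ => (hother i.succ (Fin.succ_ne_zero i)).2
    rw [this, add_zero] at hsum2
    exact hsum2
  have hφ0' : (v 0).1 ∈ C₀ ⊔ C₁ := by
    rw [hφ (v 0), hv02, zero_smul, sub_zero] at hφ0
    exact hφ0
  obtain ⟨w₀, hw₀, w₁, hw₁, hw⟩ := AddSubgroup.mem_sup.1 hφ0'
  -- build the vector for hjoin
  have h0last : (0 : Fin (r + 1 + 1)) ≠ Fin.last (r + 1) := by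
    simp [Fin.ext_iff]
  set v' : Fin (r + 1 + 1) → (Fin (n - r - 1) → ℤ) := fun j =>
    if hj : j = Fin.last (r + 1) then w₁
    else if j = 0 then w₀ else (v (j.castPred hj)).1 with hv'
  have hv'last : v' (Fin.last (r + 1)) = w₁ := by simp [hv']
  have hv'zero : v' 0 = w₀ := by simp [hv', h0last]
  have hv'cast : ∀ i : Fin (r + 1), v' i.castSucc = if i = 0 then w₀ else (v i).1 := by
    intro i
    have hne : i.castSucc ≠ Fin.last (r + 1) := (Fin.castSucc_lt_last i).ne
    simp only [hv', dif_neg hne, Fin.castSucc_eq_zero_iff, Fin.castPred_castSucc]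
  have hmem : ∀ j, v' j ∈ AddSubgroup.closure (A' j - A' j) := by
    intro j
    by_cases hj : j = Fin.last (r + 1)
    · subst hj; rw [hv'last]; exact hw₁
    · by_cases hj0 : j = 0
      · subst hj0; rw [hv'zero]; exact hw₀
      · have hj' : j.castPred hj ≠ 0 := by
          intro h
          apply hj0
          have := Fin.castSucc_castPred j hj
          rw [← this, h, Fin.castSucc_zero]
        have : v' j = (v (j.castPred hj)).1 := by
          simp [hv', dif_neg hj, if_neg hj0]
        rw [this]
        have h2 := (hother (j.castPred hj) hj').1
        rwa [Fin.castSucc_castPred] at h2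
  have hsum' : ∑ j, v' j = 0 := by
    rw [Fin.sum_univ_castSucc]
    have e1 : ∑ i : Fin (r + 1), v' i.castSucc
        = ∑ i : Fin (r + 1), (if i = 0 then w₀ else (v i).1) :=
      Finset.sum_congr rfl fun i _ => hv'cast i
    have e2 : ∑ i : Fin (r + 1), (if i = 0 then w₀ else (v i).1)
        = w₀ + ∑ i : Fin r, (v i.succ).1 := by
      rw [Fin.sum_univ_succ, if_pos rfl]
      simp [Fin.succ_ne_zero]
    have hfsum : (v 0).1 + ∑ i : Fin r, (v i.succ).1 = 0 :=
      (Fin.sum_univ_succ _).symm.trans hsum1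
    rw [e1, e2, hv'last]
    rw [← hw] at hfsum
    linear_combination hfsum
  have hzero := hjoin v' hmem hsum'
  -- conclude
  intro i
  by_cases hi : i = 0
  · subst hi
    have hw₀0 : w₀ = 0 := by rw [← hv'zero]; exact hzero 0
    have hw₁0 : w₁ = 0 := by rw [← hv'last]; exact hzero (Fin.last (r + 1))
    have h1 : (v 0).1 = 0 := by rw [← hw, hw₀0, hw₁0, add_zero]
    rw [Prod.ext_iff]
    exact ⟨h1, hv02⟩
  · have h1 : (v i).1 = 0 := by
      have := hzero i.castSucc
      rwa [hv'cast, if_neg hi] at this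
    rw [Prod.ext_iff]
    exact ⟨h1, (hother i hi).2⟩
end

section
/- Let $V_0,\ldots,V_r$ be subspaces of a finite-dimensional $k$-vector space $V$ ($k$ a field), and let $K = \{(m_0,\ldots,m_r) \in V_0\oplus\cdots\oplus V_r \mid \sum_i m_i = 0\}$. Fix $(m_0,\ldots,m_r) \in K$ such that: (i) $\dim\langle m_0,\ldots,m_r\rangle = \alpha(V_0,\ldots,V_r)$ is maximal, and (ii) every element $(m'_0,\ldots,m'_r) \in K$ satisfies $m'_i \in V' := \langle m_0,\ldots,m_r\rangle$ for all $i$. Then for the quotient map $q : V \to V/V'$, the subspace $q(V_0) + \cdots + q(V_r) \subseteq V/V'$ is the internal direct sum of $q(V_0),\ldots,q(V_r)$. -/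
open Module

/-- fix `(m₀,…,m_r)` in `K = {(m_i) | m_i ∈ V_i, ∑ m_i = 0}` such that
(i) `dim ⟨m₀,…,m_r⟩ = α(V₀,…,V_r)` is maximal on `K`, and (ii) every `(m'₀,…,m'_r) ∈ K` has
all components in `V' = ⟨m₀,…,m_r⟩`.  Then the images `q(V₀), …, q(V_r)` under the quotient
map `q : V → V/V'` form an internal direct sum. -/
theorem stmt13 {k V : Type*} [Field k] [AddCommGroup V] [Module k V] [FiniteDimensional k V]
    {r : ℕ} (Vs : Fin (r + 1) → Submodule k V)
    (m : Fin (r + 1) → V) (hmV : ∀ i, m i ∈ Vs i) (hmsum : ∑ i, m i = 0)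
    (hmax : ∀ m' : Fin (r + 1) → V, (∀ i, m' i ∈ Vs i) → ∑ i, m' i = 0 →
      finrank k (Submodule.span k (Set.range m')) ≤ finrank k (Submodule.span k (Set.range m)))
    (habs : ∀ m' : Fin (r + 1) → V, (∀ i, m' i ∈ Vs i) → ∑ i, m' i = 0 →
      ∀ i, m' i ∈ Submodule.span k (Set.range m)) :
    ∀ w : Fin (r + 1) → V ⧸ Submodule.span k (Set.range m),
      (∀ i, w i ∈ (Vs i).map (Submodule.span k (Set.range m)).mkQ) →
      ∑ i, w i = 0 → ∀ i, w i = 0 := by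
  set V' := Submodule.span k (Set.range m) with hV'
  intro w hw hsum i
  choose v hvV hvw using hw
  have hsumv : ∑ j, v j ∈ V' := by
    rw [← Submodule.Quotient.mk_eq_zero, ← Submodule.mkQ_apply]
    have h1 : V'.mkQ (∑ j, v j) = ∑ j, w j := by
      rw [map_sum]; exact Finset.sum_congr rfl fun j _ => hvw j
    exact h1.trans hsum
  obtain ⟨c, hc⟩ := (Submodule.mem_span_range_iff_exists_fun k).mp hsumv
  have hK : ∀ j, (fun j => v j - c j • m j) j ∈ Vs j := fun j =>
    Submodule.sub_mem _ (hvV j) (Submodule.smul_mem _ _ (hmV j))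
  have hKsum : ∑ j, (v j - c j • m j) = 0 := by
    rw [Finset.sum_sub_distrib, hc, sub_eq_zero]
  have := habs _ hK hKsum i
  have hvi : v i ∈ V' := by
    have hmi : c i • m i ∈ V' :=
      Submodule.smul_mem _ _ (Submodule.subset_span ⟨i, rfl⟩)
    simpa using Submodule.add_mem _ this hmi
  rw [← hvw i, Submodule.mkQ_apply, Submodule.Quotient.mk_eq_zero]
  exact hvi
end

section
/- Let $A \subset \mathbb{Z}^n$ be a finite subset, $r \le r' \le n$, and let $\pi' : \mathbb{Z}^n \to \mathbb{Z}^{r'}$ and $\varpi : \mathbb{Z}^{r'} \to \mathbb{Z}^r$ be surjective group homomorphisms with $\pi = \varpi \circ \pi'$. For $\pi(A) = \{u'_0,\ldots,u'_r\}$ define $M_i = \langle (\pi^{-1}(u'_i)\cap A) - (\pi^{-1}(u'_i)\cap A)\rangle \subseteq \ker\pi$, and similarly for $\pi'(A) = \{v'_0,\ldots,v'_{r'}\}$ define $M'_j = \langle (\pi'^{-1}(v'_j)\cap A) - (\pi'^{-1}(v'_j)\cap A)\rangle \subseteq \ker\pi'$. Assume $\pi(A)$ has exactly $r+1$ elements that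 are $\mathbb{Z}$-affinely independent, $\pi'(A)$ has exactly $r'+1$ elements that are $\mathbb{Z}$-affinely independent, and that $\sum_{j=0}^{r'} M'_j \subseteq \ker\pi'$ is the internal direct sum of the $M'_j$. Then $\sum_{i=0}^{r} M_i \subseteq \ker\pi$ is the internal direct sum of the $M_i$. -/
open Pointwise

/-- The point `e_i` of the standard simplex `{0, e_1, …, e_r} ⊂ ℤ^r` (with `e_0 = 0`). -/
def cayleyVertex {r : ℕ} (i : Fin (r + 1)) : Fin r → ℤ :=
  fun j => if (j : ℕ) + 1 = (i : ℕ) then 1 else 0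

/-- Two subsets of free abelian groups are `ℤ`-affinely equivalent if an affine isomorphism
(a group isomorphism followed by a translation) maps one onto the other. -/
def ZAffineEquiv {M M' : Type*} [AddCommGroup M] [AddCommGroup M']
    (S : Set M) (S' : Set M') : Prop :=
  ∃ (e : M ≃+ M') (t : M'), (fun x => e x + t) '' S = S'

/-!
Every element of `M_i` is a sum of elements of the `M'_j` over the `j` with `ϖ (u' j) = u i`,
plus an integer combination `∑ c_j a_j` with `∑ c_j = 0` of representatives
`a_j ∈ A ∩ π'⁻¹(u' j)`. Summing such decompositions of a relation `∑ v_i = 0` and applying `π'`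
gives an affine relation among the `u' j`, so the total coefficients vanish; the direct-sum
hypothesis then kills the `M'_j`-parts, and since distinct `i` use disjoint sets of `j`, every
`v_i` vanishes.
-/

section Cayley

variable {r : ℕ}

@[simp]
lemma cayleyVertex_zero : cayleyVertex (0 : Fin (r + 1)) = 0 := by
  ext j
  simp [cayleyVertex]

@[simp]
lemma cayleyVertex_succ (i : Fin r) : cayleyVertex i.succ = Pi.single i 1 := by
  ext j
  simp [cayleyVertex, Pi.single_apply, Fin.ext_iff]

lemma sum_smul_cayleyVertex (w : Fin (r + 1) → ℤ) :
    ∑ i, w i • cayleyVertex i = fun j => w j.succ := by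
  ext j
  simp [Fin.sum_univ_succ, Pi.single_apply]

lemma affineIndependent_cayleyVertex : AffineIndependent ℤ (cayleyVertex (r := r)) := by
  rw [affineIndependent_iff_of_fintype]
  intro w hw hcomb
  rw [Finset.weightedVSub_eq_linear_combination _ hw, sum_smul_cayleyVertex] at hcomb
  have hsucc : ∀ j : Fin r, w j.succ = 0 := fun j => congrFun hcomb j
  rw [Fin.sum_univ_succ, Finset.sum_eq_zero fun j _ => hsucc j, add_zero] at hw
  exact Fin.cases hw hsucc

end Cayley

lemma ZAffineEquiv.affineIndependent_iff {M M' : Type*} [AddCommGroup M] [AddCommGroup M']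
    {S : Set M} {S' : Set M'} (h : ZAffineEquiv S S') :
    AffineIndependent ℤ ((↑) : S → M) ↔ AffineIndependent ℤ ((↑) : S' → M') := by
  obtain ⟨e, t, rfl⟩ := h
  let φ : M ≃ᵃ[ℤ] M' := e.toIntLinearEquiv.toAffineEquiv.trans (AffineEquiv.constVAdd ℤ M' t)
  have hφ : ⇑φ = fun x => e x + t := funext fun x => add_comm t (e x)
  rw [← φ.affineIndependent_set_of_eq_iff, hφ]

section Fibers

variable {G H K ι : Type*} [AddCommGroup G] [AddCommGroup H] [Fintype ι]

def fiberDiffSpan (f : G → K) (A : Set G) (y : K) : AddSubgroup G :=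
  AddSubgroup.closure ((f ⁻¹' {y} ∩ A) - (f ⁻¹' {y} ∩ A))

lemma fiberDiffSpan_le_ker (f : G →+ H) (A : Set G) (y : H) : fiberDiffSpan f A y ≤ f.ker := by
  rw [fiberDiffSpan, AddSubgroup.closure_le]
  rintro _ ⟨p, ⟨hp, -⟩, q, ⟨hq, -⟩, rfl⟩
  simp_all

lemma exists_sum_of_mem_fiberDiffSpan_comp (f : G →+ H) (ϖ : H → K) {A : Set G}
    {u' : ι → H} {a : ι → G} (ha : ∀ j, a j ∈ A ∧ f (a j) = u' j)
    (hA : ∀ x ∈ A, ∃ j, f x = u' j) {y : K} {x : G} (hx : x ∈ fiberDiffSpan (ϖ ∘ f) A y) :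
    ∃ (w : ι → G) (c : ι → ℤ), (∀ j, w j ∈ fiberDiffSpan f A (u' j)) ∧
      (∀ j, ϖ (u' j) ≠ y → w j = 0 ∧ c j = 0) ∧ ∑ j, c j = 0 ∧
      x = ∑ j, (w j + c j • a j) := by
  classical
  have point : ∀ p ∈ A, ϖ (f p) = y →
      ∃ j, ϖ (u' j) = y ∧ p - a j ∈ fiberDiffSpan f A (u' j) := by
    intro p hp hpy
    obtain ⟨j, hj⟩ := hA p hp
    exact ⟨j, hj ▸ hpy, AddSubgroup.subset_closure
      (Set.sub_mem_sub ⟨hj, hp⟩ ⟨(ha j).2, (ha j).1⟩)⟩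
  have single_mem : ∀ j k {z : G}, z ∈ fiberDiffSpan f A (u' k) →
      Pi.single (M := fun _ => G) k z j ∈ fiberDiffSpan f A (u' j) := by
    intro j k z hz
    rcases eq_or_ne j k with rfl | hjk
    · simpa using hz
    · simp [hjk]
  induction hx using AddSubgroup.closure_induction with
  | mem _ hpq =>
    obtain ⟨p, ⟨hpy, hp⟩, q, ⟨hqy, hq⟩, rfl⟩ := hpq
    obtain ⟨jp, hjp, hp'⟩ := point p hp hpy
    obtain ⟨jq, hjq, hq'⟩ := point q hq hqy
    refine ⟨Pi.single jp (p - a jp) - Pi.single jq (q - a jq), Pi.single jp 1 - Pi.single jq 1,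
      fun j => sub_mem (single_mem j jp hp') (single_mem j jq hq'), fun j hj => ?_, by simp, ?_⟩
    · have hjp' : j ≠ jp := by rintro rfl; exact hj hjp
      have hjq' : j ≠ jq := by rintro rfl; exact hj hjq
      simp [hjp', hjq']
    · simp only [Pi.sub_apply, Pi.single_apply, sub_smul, ite_smul, one_smul, zero_smul,
        Finset.sum_add_distrib, Finset.sum_sub_distrib, Finset.sum_ite_eq', Finset.mem_univ,
        if_true]
      abel
  | zero => exact ⟨0, 0, fun j => zero_mem _, fun _ _ => ⟨rfl, rfl⟩, by simp, by simp⟩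
  | add _ _ _ _ h₁ h₂ =>
    obtain ⟨w₁, c₁, hw₁, hs₁, hc₁, rfl⟩ := h₁
    obtain ⟨w₂, c₂, hw₂, hs₂, hc₂, rfl⟩ := h₂
    refine ⟨w₁ + w₂, c₁ + c₂, fun j => add_mem (hw₁ j) (hw₂ j), fun j hj => ?_, ?_, ?_⟩
    · simp [hs₁ j hj, hs₂ j hj]
    · simp [Finset.sum_add_distrib, hc₁, hc₂]
    · simp only [Pi.add_apply, add_smul, ← Finset.sum_add_distrib]
      exact Finset.sum_congr rfl fun j _ => by abel
  | neg _ _ h =>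
    obtain ⟨w, c, hw, hs, hc, rfl⟩ := h
    refine ⟨-w, -c, fun j => neg_mem (hw j), fun j hj => ?_, by simp [hc], ?_⟩
    · simp [hs j hj]
    · simp [Finset.sum_add_distrib, add_comm]

end Fibers

lemma eq_zero_of_sum_eq_zero_of_injective {ι K M : Type*} [Fintype ι] [AddCommMonoid M]
    {u : ι → K} (hu : Function.Injective u) {k : K} {x : ι → M}
    (hx : ∀ i, u i ≠ k → x i = 0) (hs : ∑ i, x i = 0) (i : ι) : x i = 0 := by
  by_cases hi : u i = k
  · rwa [Finset.sum_eq_single i (fun i' _ hi' => hx i' (hi ▸ hu.ne hi')) (by simp)] at hs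
  · exact hx i hi

theorem stmt14_general {n r r' : ℕ}
    (A : Set (Fin n → ℤ))
    (π' : (Fin n → ℤ) →+ (Fin r' → ℤ))
    (ϖ : (Fin r' → ℤ) →+ (Fin r → ℤ))
    (u : Fin (r + 1) → (Fin r → ℤ)) (hu : Function.Injective u)
    (u' : Fin (r' + 1) → (Fin r' → ℤ)) (hu' : Function.Injective u')
    (hu'A : Set.range u' = ⇑π' '' A)
    (hu'aff : ZAffineEquiv (Set.range u') (Set.range (cayleyVertex (r := r'))))
    (hds' : ∀ v : Fin (r' + 1) → (Fin n → ℤ),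
      (∀ j, v j ∈ AddSubgroup.closure ((⇑π' ⁻¹' {u' j} ∩ A) - (⇑π' ⁻¹' {u' j} ∩ A))) →
      ∑ j, v j = 0 → ∀ j, v j = 0) :
    ∀ v : Fin (r + 1) → (Fin n → ℤ),
      (∀ i, v i ∈ AddSubgroup.closure
        ((⇑(ϖ.comp π') ⁻¹' {u i} ∩ A) - (⇑(ϖ.comp π') ⁻¹' {u i} ∩ A))) →
      ∑ i, v i = 0 → ∀ i, v i = 0 := by
  intro v hv hsum
  have hcover : ∀ x ∈ A, ∃ j, π' x = u' j := fun x hx =>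
    (hu'A.symm ▸ ⟨x, hx, rfl⟩ : π' x ∈ Set.range u').imp fun _ => Eq.symm
  choose a ha using fun j => (hu'A ▸ ⟨j, rfl⟩ : u' j ∈ π' '' A)
  choose w c hw hsupp hc hv_eq using fun i =>
    exists_sum_of_mem_fiberDiffSpan_comp π' ϖ ha hcover (hv i)
  set W : Fin (r' + 1) → (Fin n → ℤ) := fun j => ∑ i, w i j
  set C : Fin (r' + 1) → ℤ := fun j => ∑ i, c i j
  have hW_mem : ∀ j, W j ∈ fiberDiffSpan π' A (u' j) := fun j => sum_mem fun i _ => hw i j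
  have hC_sum : ∑ j, C j = 0 := by
    rw [Finset.sum_comm]
    exact Finset.sum_eq_zero fun i _ => hc i
  have htotal : ∑ j, (W j + C j • a j) = 0 := by
    rw [← hsum]
    simp only [hv_eq, W, C, Finset.sum_smul, ← Finset.sum_add_distrib]
    exact Finset.sum_comm
  have hC_comb : ∑ j, C j • u' j = 0 := by
    have hker : ∀ j, π' (W j) = 0 := fun j => fiberDiffSpan_le_ker π' A _ (hW_mem j)
    simpa only [map_sum, map_add, map_zsmul, hker, (ha _).2, zero_add, map_zero]
      using congrArg π' htotal
  have hu'_indep : AffineIndependent ℤ u' :=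
    (hu'aff.affineIndependent_iff.2 affineIndependent_cayleyVertex.range).of_set_of_injective hu'
  have hC : ∀ j, C j = 0 := fun j =>
    hu'_indep.eq_zero_of_sum_eq_zero hC_sum hC_comb j (Finset.mem_univ j)
  have hW : ∀ j, W j = 0 := hds' W hW_mem (by simpa [hC] using htotal)
  intro i
  rw [hv_eq i]
  refine Finset.sum_eq_zero fun j _ => eq_zero_of_sum_eq_zero_of_injective hu
    (k := ϖ (u' j)) (x := fun i => w i j + c i j • a j) (fun i' hi' => ?_) ?_ i
  · simp [hsupp i' j (Ne.symm hi')]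
  · rw [Finset.sum_add_distrib, ← Finset.sum_smul]
    change W j + C j • a j = 0
    rw [hW j, hC j, zero_smul, add_zero]

/-- let `π = ϖ ∘ π'` with `π' : ℤ^n → ℤ^{r'}` and `ϖ : ℤ^{r'} → ℤ^r` surjective,
let `π(A) = {u'₀,…,u'_r}` consist of `r+1` `ℤ`-affinely independent points and
`π'(A) = {v'₀,…,v'_{r'}}` of `r'+1` `ℤ`-affinely independent points.  If the subgroups
`M'_j = ⟨(π'⁻¹(v'_j) ∩ A) - (π'⁻¹(v'_j) ∩ A)⟩` form an internal direct sum, then so do the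
subgroups `M_i = ⟨(π⁻¹(u'_i) ∩ A) - (π⁻¹(u'_i) ∩ A)⟩`. -/
theorem stmt14 {n r r' : ℕ} (hrr' : r ≤ r') (hr'n : r' ≤ n)
    (A : Set (Fin n → ℤ)) (hA : A.Finite)
    (π' : (Fin n → ℤ) →+ (Fin r' → ℤ)) (hπ' : Function.Surjective π')
    (ϖ : (Fin r' → ℤ) →+ (Fin r → ℤ)) (hϖ : Function.Surjective ϖ)
    (u : Fin (r + 1) → (Fin r → ℤ)) (hu : Function.Injective u)
    (huA : Set.range u = ⇑(ϖ.comp π') '' A)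
    (huaff : ZAffineEquiv (Set.range u) (Set.range (cayleyVertex (r := r))))
    (u' : Fin (r' + 1) → (Fin r' → ℤ)) (hu' : Function.Injective u')
    (hu'A : Set.range u' = ⇑π' '' A)
    (hu'aff : ZAffineEquiv (Set.range u') (Set.range (cayleyVertex (r := r'))))
    (hds' : ∀ v : Fin (r' + 1) → (Fin n → ℤ),
      (∀ j, v j ∈ AddSubgroup.closure ((⇑π' ⁻¹' {u' j} ∩ A) - (⇑π' ⁻¹' {u' j} ∩ A))) →
      ∑ j, v j = 0 → ∀ j, v j = 0) :
    ∀ v : Fin (r + 1) → (Fin n → ℤ),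
      (∀ i, v i ∈ AddSubgroup.closure
        ((⇑(ϖ.comp π') ⁻¹' {u i} ∩ A) - (⇑(ϖ.comp π') ⁻¹' {u i} ∩ A))) →
      ∑ i, v i = 0 → ∀ i, v i = 0 :=
  stmt14_general A π' ϖ u hu u' hu' hu'A hu'aff hds'
end
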